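/- arXiv:2102.03164 — 4 statements merged into one kernel-verified Lean document; each statement's English description precedes it below -/
import Mathlib

section
/- Let F be a class of languages (assigning to each alphabet α a set F(α) of languages over α) such that: every finite language over any alphabet belongs to F; F is closed under binary union and under concatenation of languages over the same alphabet; and F is closed under iterated nested non-erasing F-substitution, meaning that whenever h is a substitution from α to α with ε ∉ h(a), the one-letter word a ∈ h(a), and h(a) ∈ F(α) for every letter a ∈ α, and L ∈ F(α), then ⋃_{n∈ℕ} hⁿ(L) ∈ F(α). Let G₁, G₂ be groups with surjective monoid homomorphisms π₁ : A₁* → G₁ and π₂ : A₂* → G₂ from the free monoids on finite alphabets A₁, A₂, set X = A₁ ⊕ A₂, and let π : X* → G₁ ∗ G₂ be the monoid homomorphism into the free product determined by sending each letter of Aᵢ to the inclusion into G₁ ∗ G₂ of its πᵢ-value. Assume that the images ι₁(π₁⁻¹(1)) and ι₂(π₂⁻¹(1)) of the word problems of G₁ and G₂ under the letter-inclusion embeddings ιᵢ : Aᵢ* → X* belong to F(X). Then the word problem π⁻¹(1) of G₁ ∗ G₂ belongs to F(X). -/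
/-- The extension of a substitution `h` (assigning a language to each letter)
to a single word: `h(x₁⋯xₙ) = h(x₁)·h(x₂)⋯h(xₙ)`. -/
def substWord {α β : Type} (h : α → Language β) (w : List α) : Language β :=
  (w.map h).prod

/-- The extension of a substitution to a language: `h(L) = ⋃_{w ∈ L} h(w)`. -/
def substApply {α β : Type} (h : α → Language β) (L : Language α) : Language β :=
  ⋃ w ∈ L, substWord h w

/-- The word problem of a group `G` with respect to a monoid homomorphism `π`
from a free monoid, as a language: words (lists of letters) mapping to `1`. -/
def wordProblem {α : Type} {G : Type} [Group G] (π : FreeMonoid α →* G) :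
    Language α :=
  {w : List α | π (FreeMonoid.ofList w) = 1}

/-!
Let `W` be the set of words over a single one of the two alphabets that represent `1`, and let
`h` be the substitution `a ↦ W a ∪ a W`. Since `[] ∈ W`, `h` is nested and non-erasing, and each
`h a` lies in `F` by the closure properties. Applying `h` does not change the value of a word in
`G₁ ∗ G₂`, so `⋃ₙ hⁿ(W)` is contained in the word problem. Conversely, by the normal form theorem
for free products, the maximal one-alphabet blocks of a nonempty word representing `1` cannot
all be nontrivial. Deleting a trivial block leaves a shorter word representing `1`, and one
application of `h` to a letter adjacent to the block puts it back; induct on the length.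
-/

universe u

open FreeMonoid

section Substitution

variable {α β : Type}

theorem substWord_cons (h : α → Language β) (a : α) (w : List α) :
    substWord h (a :: w) = h a * substWord h w := by
  rw [substWord, List.map_cons, List.prod_cons]; rfl

theorem substWord_append (h : α → Language β) (p s : List α) :
    substWord h (p ++ s) = substWord h p * substWord h s := by
  rw [substWord, List.map_append, List.prod_append]; rfl

theorem mem_substWord_self {h : α → Language α} (hnest : ∀ a, [a] ∈ h a) (w : List α) :
    w ∈ substWord h w := by
  induction w with
  | nil => exact Language.nil_mem_one
  | cons a w ih => rw [substWord_cons]; exact Language.append_mem_mul (hnest a) ih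

theorem append_append_mem_substWord {h : α → Language α} (hnest : ∀ a, [a] ∈ h a)
    {a : α} {v : List α} (hv : v ∈ h a) (p s : List α) :
    p ++ v ++ s ∈ substWord h (p ++ a :: s) := by
  rw [substWord_append, substWord_cons, ← mul_assoc]
  exact Language.append_mem_mul
    (Language.append_mem_mul (mem_substWord_self hnest p) hv) (mem_substWord_self hnest s)

variable {M : Type*} [Monoid M] (φ : FreeMonoid α →* M)

theorem map_ofList_eq_of_mem_substWord {h : α → Language α}
    (hφ : ∀ a, ∀ v ∈ h a, φ (ofList v) = φ (of a)) {w v : List α} (hv : v ∈ substWord h w) :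
    φ (ofList v) = φ (ofList w) := by
  induction w generalizing v with
  | nil => rw [show v = [] from hv]
  | cons a w ih =>
    rw [substWord_cons, Language.mem_mul] at hv
    obtain ⟨x, hx, y, hy, rfl⟩ := hv
    rw [ofList_append, map_mul, hφ a x hx, ih hy, ofList_cons, map_mul]

end Substitution

section InsertionClosure

variable {α : Type} (W : Language α)

def insertSubst (a : α) : Language α := W * {[a]} + {[a]} * W

def insertionClosure : Language α := ⋃ n, (substApply (insertSubst W))^[n] W

variable {W}

theorem nil_notMem_insertSubst (a : α) : [] ∉ insertSubst W a := by
  intro h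
  rcases (Language.mem_add _ _ _).1 h with h | h <;>
    obtain ⟨x, hx, y, hy, hxy⟩ := Language.mem_mul.1 h
  · rw [show y = [a] from hy] at hxy; simp at hxy
  · rw [show x = [a] from hx] at hxy; simp at hxy

theorem singleton_mem_insertSubst (hnil : [] ∈ W) (a : α) : [a] ∈ insertSubst W a :=
  (Language.mem_add _ _ _).2 (Or.inl (Language.append_mem_mul hnil rfl))

theorem mem_insertionClosure_of_mem {t : List α} (ht : t ∈ W) : t ∈ insertionClosure W :=
  Set.mem_iUnion.2 ⟨0, ht⟩

theorem append_append_mem_insertionClosure (hnil : [] ∈ W) {p t s : List α}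
    (hps : p ++ s ∈ insertionClosure W) (ht : t ∈ W) : p ++ t ++ s ∈ insertionClosure W := by
  rcases eq_or_ne (p ++ s) [] with hps_nil | hps_ne
  · obtain ⟨rfl, rfl⟩ := List.append_eq_nil_iff.1 hps_nil
    simpa using mem_insertionClosure_of_mem ht
  obtain ⟨n, hn⟩ := Set.mem_iUnion.1 hps
  refine Set.mem_iUnion.2 ⟨n + 1, ?_⟩
  rw [Function.iterate_succ_apply']
  suffices p ++ t ++ s ∈ substWord (insertSubst W) (p ++ s) from Set.mem_biUnion hn this
  have hnest := singleton_mem_insertSubst hnil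
  -- `t` is glued to the letter after it if there is one, otherwise to the letter before it.
  rcases s with _ | ⟨c, s⟩
  · obtain ⟨p, c, rfl⟩ := (List.eq_nil_or_concat' p).resolve_left (by simpa using hps_ne)
    have htc : [c] ++ t ∈ insertSubst W c :=
      (Language.mem_add _ _ _).2 (Or.inr (Language.append_mem_mul rfl ht))
    simpa using append_append_mem_substWord hnest htc p []
  · have htc : t ++ [c] ∈ insertSubst W c :=
      (Language.mem_add _ _ _).2 (Or.inl (Language.append_mem_mul ht rfl))
    simpa using append_append_mem_substWord hnest htc p s

variable {M : Type*} [Monoid M] (φ : FreeMonoid α →* M)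

theorem map_ofList_eq_one_of_mem_insertionClosure (hW : ∀ t ∈ W, φ (ofList t) = 1)
    {w : List α} (hw : w ∈ insertionClosure W) : φ (ofList w) = 1 := by
  have hsubst : ∀ a, ∀ v ∈ insertSubst W a, φ (ofList v) = φ (of a) := by
    rintro a v hv
    rcases (Language.mem_add _ _ _).1 hv with hv | hv <;>
      obtain ⟨x, hx, y, hy, rfl⟩ := Language.mem_mul.1 hv
    · rw [show y = [a] from hy, ofList_append, map_mul, hW x hx, one_mul]; rfl
    · rw [show x = [a] from hx, ofList_append, map_mul, hW y hy, mul_one]; rfl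
  obtain ⟨n, hn⟩ := Set.mem_iUnion.1 hw
  induction n generalizing w with
  | zero => exact hW w hn
  | succ n ih =>
    rw [Function.iterate_succ_apply'] at hn
    obtain ⟨u, hu, hwu⟩ := Set.mem_iUnion₂.1 hn
    rw [map_ofList_eq_of_mem_substWord φ hsubst hwu, ih (Set.mem_iUnion.2 ⟨n, hu⟩) hu]

theorem mem_insertionClosure_of_map_ofList_eq_one (hnil : [] ∈ W)
    (hW : ∀ t ∈ W, φ (ofList t) = 1)
    (hfactor : ∀ w : List α, w ≠ [] → φ (ofList w) = 1 →
      ∃ p t s, w = p ++ t ++ s ∧ t ≠ [] ∧ t ∈ W)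
    (w : List α) (hw : φ (ofList w) = 1) : w ∈ insertionClosure W := by
  rcases eq_or_ne w [] with rfl | hne
  · exact mem_insertionClosure_of_mem hnil
  obtain ⟨p, t, s, rfl, ht, htW⟩ := hfactor w hne hw
  have hps : φ (ofList (p ++ s)) = 1 := by
    simpa [ofList_append, hW t htW] using hw
  exact append_append_mem_insertionClosure hnil
    (mem_insertionClosure_of_map_ofList_eq_one hnil hW hfactor (p ++ s) hps) htW
termination_by w.length
decreasing_by subst_vars; simpa using List.length_pos_iff.2 ht

theorem setOf_map_ofList_eq_one_eq_insertionClosure (hnil : [] ∈ W)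
    (hW : ∀ t ∈ W, φ (ofList t) = 1)
    (hfactor : ∀ w : List α, w ≠ [] → φ (ofList w) = 1 →
      ∃ p t s, w = p ++ t ++ s ∧ t ≠ [] ∧ t ∈ W) :
    {w | φ (ofList w) = 1} = insertionClosure W :=
  Set.ext fun _ => ⟨mem_insertionClosure_of_map_ofList_eq_one φ hnil hW hfactor _,
    map_ofList_eq_one_of_mem_insertionClosure φ hW⟩

end InsertionClosure

section Blocks

variable {A₁ A₂ : Type*}

def blockWord : List A₁ ⊕ List A₂ → List (A₁ ⊕ A₂) :=
  Sum.elim (List.map Sum.inl) (List.map Sum.inr)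

def consBlock : A₁ ⊕ A₂ → List (List A₁ ⊕ List A₂) → List (List A₁ ⊕ List A₂)
  | .inl a, .inl u :: bs => .inl (a :: u) :: bs
  | .inl a, bs => .inl [a] :: bs
  | .inr a, .inr u :: bs => .inr (a :: u) :: bs
  | .inr a, bs => .inr [a] :: bs

def blocks (w : List (A₁ ⊕ A₂)) : List (List A₁ ⊕ List A₂) := w.foldr consBlock []

theorem flatten_map_blockWord_blocks (w : List (A₁ ⊕ A₂)) :
    ((blocks w).map blockWord).flatten = w := by
  induction w with
  | nil => rfl
  | cons x w ih =>
    change ((consBlock x (blocks w)).map blockWord).flatten = x :: w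
    rcases x with a | a <;> rcases hbs : blocks w with _ | ⟨b | b, bs⟩ <;> rw [hbs] at ih <;>
      simp [consBlock, blockWord, ← ih]

theorem blockWord_ne_nil_of_mem_blocks {w : List (A₁ ⊕ A₂)} {b : List A₁ ⊕ List A₂}
    (hb : b ∈ blocks w) : blockWord b ≠ [] := by
  induction w with
  | nil => simp [blocks] at hb
  | cons x w ih =>
    change b ∈ consBlock x (blocks w) at hb
    rcases x with a | a <;> rcases hbs : blocks w with _ | ⟨c | c, bs⟩ <;>
      simp only [hbs, consBlock, List.mem_cons, List.not_mem_nil] at hb ih <;>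
      aesop (add norm blockWord)

theorem isChain_blocks (w : List (A₁ ⊕ A₂)) :
    (blocks w).IsChain (fun x y => x.isLeft ≠ y.isLeft) := by
  induction w with
  | nil => exact List.IsChain.nil
  | cons x w ih =>
    change (consBlock x (blocks w)).IsChain _
    rcases x with a | a <;> rcases hbs : blocks w with _ | ⟨c | c, _ | ⟨d, bs⟩⟩ <;>
      rw [hbs] at ih <;> simp_all [consBlock, List.isChain_cons_cons]

end Blocks

namespace Monoid.Coprod

variable {M N : Type u} [Monoid M] [Monoid N]

/-- The pair `M, N` as a `Bool`-indexed family, to compare `M ∗ N` with `CoprodI`. -/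
def pairFamily (M N : Type u) : Bool → Type u
  | true => M
  | false => N

instance : ∀ b, Monoid (pairFamily M N b)
  | true => ‹Monoid M›
  | false => ‹Monoid N›

def toSigma : M ⊕ N → Σ b, pairFamily M N b
  | .inl m => ⟨true, m⟩
  | .inr n => ⟨false, n⟩

def toCoprodI : M ∗ N →* CoprodI (pairFamily M N) :=
  lift (CoprodI.of (M := pairFamily M N) (i := true))
    (CoprodI.of (M := pairFamily M N) (i := false))

theorem toCoprodI_sumElim (x : M ⊕ N) :
    toCoprodI (Sum.elim inl inr x) = CoprodI.of (toSigma x).2 := by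
  rcases x with m | n
  exacts [lift_apply_inl _ _ m, lift_apply_inr _ _ n]

/-- The normal form theorem for `M ∗ N`, through reduced words of `CoprodI`. -/
theorem eq_nil_of_prod_eq_one (l : List (M ⊕ N)) (hne : ∀ x ∈ l, x.elim (· ≠ 1) (· ≠ 1))
    (halt : l.IsChain fun x y => x.isLeft ≠ y.isLeft)
    (hprod : (l.map (Sum.elim inl inr)).prod = 1) : l = [] := by
  classical
  let w : CoprodI.Word (pairFamily M N) :=
    { toList := l.map toSigma
      ne_one := by
        simp only [List.mem_map]
        rintro _ ⟨m | n, hx, rfl⟩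
        exacts [hne _ hx, hne _ hx]
      chain_ne := (List.isChain_map _).2 <| halt.imp fun x y hxy => by
        rcases x with _ | _ <;> rcases y with _ | _ <;> simp_all [toSigma] }
  have hw : w.prod = CoprodI.Word.empty.prod := by
    rw [CoprodI.Word.prod_empty, ← map_one toCoprodI, ← hprod, map_list_prod, List.map_map]
    simp only [CoprodI.Word.prod, w, List.map_map]
    congr 1
    exact List.map_congr_left fun x _ => (toCoprodI_sumElim x).symm
  have hinj : Function.Injective (CoprodI.Word.prod (M := pairFamily M N)) :=
    CoprodI.Word.equiv.symm.injective
  exact List.map_eq_nil_iff.1 (congrArg CoprodI.Word.toList (hinj hw))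

end Monoid.Coprod

section FreeProduct

open Monoid

variable {A₁ A₂ : Type*} {G₁ G₂ : Type u} [Monoid G₁] [Monoid G₂]
  (π₁ : FreeMonoid A₁ →* G₁) (π₂ : FreeMonoid A₂ →* G₂)

def trivialBlocks : Language (A₁ ⊕ A₂) :=
  (List.map Sum.inl '' {u | π₁ (ofList u) = 1} ∪ List.map Sum.inr '' {u | π₂ (ofList u) = 1} :
    Set (List (A₁ ⊕ A₂)))

def blockValue : List A₁ ⊕ List A₂ → G₁ ⊕ G₂ :=
  Sum.map (fun u => π₁ (ofList u)) (fun u => π₂ (ofList u))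

theorem nil_mem_trivialBlocks : [] ∈ trivialBlocks π₁ π₂ :=
  Or.inl ⟨[], map_one π₁, rfl⟩

variable {π₁ π₂} {π : FreeMonoid (A₁ ⊕ A₂) →* Coprod G₁ G₂}
  (hπl : ∀ a, π (of (Sum.inl a)) = Coprod.inl (π₁ (of a)))
  (hπr : ∀ b, π (of (Sum.inr b)) = Coprod.inr (π₂ (of b)))
include hπl hπr

theorem map_ofList_blockWord (b : List A₁ ⊕ List A₂) :
    π (ofList (blockWord b)) = Sum.elim Coprod.inl Coprod.inr (blockValue π₁ π₂ b) := by
  rcases b with u | u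
  · exact DFunLike.congr_fun
      (FreeMonoid.hom_eq hπl : π.comp (FreeMonoid.map Sum.inl) = Coprod.inl.comp π₁) (ofList u)
  · exact DFunLike.congr_fun
      (FreeMonoid.hom_eq hπr : π.comp (FreeMonoid.map Sum.inr) = Coprod.inr.comp π₂) (ofList u)

theorem map_ofList_flatten_map_blockWord (bs : List (List A₁ ⊕ List A₂)) :
    π (ofList (bs.map blockWord).flatten) =
      ((bs.map (blockValue π₁ π₂)).map (Sum.elim Coprod.inl Coprod.inr)).prod := by
  simp [ofList_flatten, map_list_prod, Function.comp_def, map_ofList_blockWord hπl hπr]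

theorem map_ofList_eq_one_of_mem_trivialBlocks {t : List (A₁ ⊕ A₂)}
    (ht : t ∈ trivialBlocks π₁ π₂) : π (ofList t) = 1 := by
  rcases ht with ⟨u, hu, rfl⟩ | ⟨u, hu, rfl⟩
  · simpa [blockValue, blockWord, show π₁ (ofList u) = 1 from hu] using
      map_ofList_blockWord hπl hπr (.inl u)
  · simpa [blockValue, blockWord, show π₂ (ofList u) = 1 from hu] using
      map_ofList_blockWord hπl hπr (.inr u)

theorem exists_factor_mem_trivialBlocks {w : List (A₁ ⊕ A₂)} (hw : w ≠ [])
    (h1 : π (ofList w) = 1) : ∃ p t s, w = p ++ t ++ s ∧ t ≠ [] ∧ t ∈ trivialBlocks π₁ π₂ := by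
  by_contra! hno
  -- Otherwise the maximal blocks of `w` give a reduced word for `1` in `G₁ ∗ G₂`.
  have hnontriv : ∀ x ∈ (blocks w).map (blockValue π₁ π₂), x.elim (· ≠ 1) (· ≠ 1) := by
    simp only [List.mem_map]
    rintro _ ⟨b, hb, rfl⟩
    obtain ⟨p, s, hsplit⟩ := List.append_of_mem hb
    have hfactor : w = (p.map blockWord).flatten ++ blockWord b ++ (s.map blockWord).flatten := by
      rw [← flatten_map_blockWord_blocks w, hsplit]; simp
    have hb_triv := hno _ _ _ hfactor (blockWord_ne_nil_of_mem_blocks hb)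
    rcases b with u | u
    · exact fun h => hb_triv (Or.inl ⟨u, h, rfl⟩)
    · exact fun h => hb_triv (Or.inr ⟨u, h, rfl⟩)
  have halt : ((blocks w).map (blockValue π₁ π₂)).IsChain (fun x y => x.isLeft ≠ y.isLeft) :=
    (List.isChain_map _).2 <| (isChain_blocks w).imp fun x y hxy => by simpa [blockValue] using hxy
  have hprod := map_ofList_flatten_map_blockWord hπl hπr (blocks w)
  rw [flatten_map_blockWord_blocks, h1] at hprod
  have hnil := Coprod.eq_nil_of_prod_eq_one _ hnontriv halt hprod.symm
  rw [List.map_eq_nil_iff] at hnil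
  exact hw (by rw [← flatten_map_blockWord_blocks w, hnil]; rfl)

end FreeProduct

theorem wordProblem_freeProduct_mem_general
    (F : ∀ α : Type, Set (Language α))
    (hfin : ∀ (α : Type) (L : Language α), L.Finite → L ∈ F α)
    (hunion : ∀ (α : Type) (L₁ L₂ : Language α),
      L₁ ∈ F α → L₂ ∈ F α → ((L₁ ∪ L₂ : Set (List α)) : Language α) ∈ F α)
    (hconcat : ∀ (α : Type) (L₁ L₂ : Language α),
      L₁ ∈ F α → L₂ ∈ F α → L₁ * L₂ ∈ F α)
    (hiter : ∀ (α : Type) (h : α → Language α),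
      (∀ a : α, [] ∉ h a) → (∀ a : α, [a] ∈ h a) → (∀ a : α, h a ∈ F α) →
      ∀ L ∈ F α, (⋃ n : ℕ, (substApply h)^[n] L) ∈ F α)
    {G₁ G₂ : Type} [Group G₁] [Group G₂]
    (A₁ A₂ : Type)
    (π₁ : FreeMonoid A₁ →* G₁) (π₂ : FreeMonoid A₂ →* G₂)
    (π : FreeMonoid (A₁ ⊕ A₂) →* Monoid.Coprod G₁ G₂)
    (hπl : ∀ a : A₁, π (FreeMonoid.of (Sum.inl a)) =
      Monoid.Coprod.inl (π₁ (FreeMonoid.of a)))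
    (hπr : ∀ b : A₂, π (FreeMonoid.of (Sum.inr b)) =
      Monoid.Coprod.inr (π₂ (FreeMonoid.of b)))
    (h₁ : (List.map Sum.inl '' wordProblem π₁ : Language (A₁ ⊕ A₂)) ∈ F (A₁ ⊕ A₂))
    (h₂ : (List.map Sum.inr '' wordProblem π₂ : Language (A₁ ⊕ A₂)) ∈ F (A₁ ⊕ A₂)) :
    wordProblem π ∈ F (A₁ ⊕ A₂) := by
  have hW : trivialBlocks π₁ π₂ ∈ F (A₁ ⊕ A₂) := hunion _ _ _ h₁ h₂
  have hsingleton (a : A₁ ⊕ A₂) : ({[a]} : Language (A₁ ⊕ A₂)) ∈ F (A₁ ⊕ A₂) :=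
    hfin _ _ (Set.finite_singleton _)
  have hsubst (a : A₁ ⊕ A₂) : insertSubst (trivialBlocks π₁ π₂) a ∈ F (A₁ ⊕ A₂) :=
    hunion _ _ _ (hconcat _ _ _ hW (hsingleton a)) (hconcat _ _ _ (hsingleton a) hW)
  have hword : wordProblem π = insertionClosure (trivialBlocks π₁ π₂) :=
    setOf_map_ofList_eq_one_eq_insertionClosure π (nil_mem_trivialBlocks π₁ π₂)
      (fun _ => map_ofList_eq_one_of_mem_trivialBlocks hπl hπr)
      (fun _ => exists_factor_mem_trivialBlocks hπl hπr)
  rw [hword]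
  exact hiter _ _ nil_notMem_insertSubst (singleton_mem_insertSubst (nil_mem_trivialBlocks π₁ π₂))
    hsubst _ hW

/-- Theorem (WP Free Product Closure): if the class `F` contains all finite
languages, is closed under union, concatenation and iterated nested non-erasing
`F`-substitution, and the (embedded) word problems of `G₁` and `G₂` lie in
`F(A₁ ⊕ A₂)`, then the word problem of `G₁ ∗ G₂` lies in `F(A₁ ⊕ A₂)`. -/
theorem wordProblem_freeProduct_mem
    (F : ∀ α : Type, Set (Language α))
    (hfin : ∀ (α : Type) (L : Language α), L.Finite → L ∈ F α)
    (hunion : ∀ (α : Type) (L₁ L₂ : Language α),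
      L₁ ∈ F α → L₂ ∈ F α → ((L₁ ∪ L₂ : Set (List α)) : Language α) ∈ F α)
    (hconcat : ∀ (α : Type) (L₁ L₂ : Language α),
      L₁ ∈ F α → L₂ ∈ F α → L₁ * L₂ ∈ F α)
    (hiter : ∀ (α : Type) (h : α → Language α),
      (∀ a : α, [] ∉ h a) → (∀ a : α, [a] ∈ h a) → (∀ a : α, h a ∈ F α) →
      ∀ L ∈ F α, (⋃ n : ℕ, (substApply h)^[n] L) ∈ F α)
    {G₁ G₂ : Type} [Group G₁] [Group G₂]
    (A₁ A₂ : Type) [Fintype A₁] [Fintype A₂]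
    (π₁ : FreeMonoid A₁ →* G₁) (π₂ : FreeMonoid A₂ →* G₂)
    (hπ₁ : Function.Surjective π₁) (hπ₂ : Function.Surjective π₂)
    (π : FreeMonoid (A₁ ⊕ A₂) →* Monoid.Coprod G₁ G₂)
    (hπl : ∀ a : A₁, π (FreeMonoid.of (Sum.inl a)) =
      Monoid.Coprod.inl (π₁ (FreeMonoid.of a)))
    (hπr : ∀ b : A₂, π (FreeMonoid.of (Sum.inr b)) =
      Monoid.Coprod.inr (π₂ (FreeMonoid.of b)))
    (h₁ : (List.map Sum.inl '' wordProblem π₁ : Language (A₁ ⊕ A₂)) ∈ F (A₁ ⊕ A₂))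
    (h₂ : (List.map Sum.inr '' wordProblem π₂ : Language (A₁ ⊕ A₂)) ∈ F (A₁ ⊕ A₂)) :
    wordProblem π ∈ F (A₁ ⊕ A₂) :=
  wordProblem_freeProduct_mem_general F hfin hunion hconcat hiter A₁ A₂ π₁ π₂ π hπl hπr h₁ h₂
end

section
/- Let F be a class of languages (assigning to each alphabet α a set F(α) of languages over α) that is closed under inverse homomorphisms: for every monoid homomorphism φ : β* → α* between free monoids and every L ∈ F(α), the preimage φ⁻¹(L) belongs to F(β). Let G be a group, X a finite alphabet, and π : X* → G a surjective monoid homomorphism such that the word problem π⁻¹(1) belongs to F(X). Then for every finite alphabet X' and every surjective monoid homomorphism π' : X'* → G, the word problem π'⁻¹(1) belongs to F(X'). -/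
/-- Projectivity of free monoids. -/
theorem FreeMonoid.exists_comp_eq_of_surjective {X X' M : Type*} [Monoid M]
    {π : FreeMonoid X →* M} (hπ : Function.Surjective π) (π' : FreeMonoid X' →* M) :
    ∃ φ : FreeMonoid X' →* FreeMonoid X, π.comp φ = π' := by
  choose f hf using fun x' : X' => hπ (π' (FreeMonoid.of x'))
  exact ⟨FreeMonoid.lift f, FreeMonoid.hom_eq fun x' => by simp [hf]⟩

theorem wordProblem_comp {X X' G : Type} [Group G] (π : FreeMonoid X →* G)
    (φ : FreeMonoid X' →* FreeMonoid X) :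
    wordProblem (π.comp φ) =
      {w : List X' | FreeMonoid.toList (φ (FreeMonoid.ofList w)) ∈ wordProblem π} := by
  rfl

theorem wordProblem_independent_of_presentation_general
    (F : ∀ α : Type, Set (Language α))
    (hinv : ∀ (α β : Type) (φ : FreeMonoid β →* FreeMonoid α) (L : Language α),
      L ∈ F α →
      ({w : List β | FreeMonoid.toList (φ (FreeMonoid.ofList w)) ∈ L} :
        Language β) ∈ F β)
    (G : Type) [Group G] (X : Type)
    (π : FreeMonoid X →* G) (hπ : Function.Surjective π)
    (hWP : wordProblem π ∈ F X)
    (X' : Type) (π' : FreeMonoid X' →* G) :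
    wordProblem π' ∈ F X' := by
  obtain ⟨φ, rfl⟩ := FreeMonoid.exists_comp_eq_of_surjective hπ π'
  rw [wordProblem_comp]
  exact hinv X X' φ _ hWP

/-- If a class of languages `F` is closed under inverse homomorphisms of free
monoids, then having word problem in `F` is independent of the chosen finite
generating set (presentation): if some surjection `π : X* → G` has word problem
in `F(X)`, then every surjection `π' : X'* → G` has word problem in `F(X')`. -/
theorem wordProblem_independent_of_presentation
    (F : ∀ α : Type, Set (Language α))
    (hinv : ∀ (α β : Type) (φ : FreeMonoid β →* FreeMonoid α) (L : Language α),
      L ∈ F α →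
      ({w : List β | FreeMonoid.toList (φ (FreeMonoid.ofList w)) ∈ L} :
        Language β) ∈ F β)
    (G : Type) [Group G] (X : Type) [Fintype X]
    (π : FreeMonoid X →* G) (hπ : Function.Surjective π)
    (hWP : wordProblem π ∈ F X)
    (X' : Type) [Fintype X'] (π' : FreeMonoid X' →* G)
    (hπ' : Function.Surjective π') :
    wordProblem π' ∈ F X' :=
  wordProblem_independent_of_presentation_general F hinv G X π hπ hWP X' π'
end

section
/- Let F be a full AFL: a class of languages (assigning to each alphabet α a set F(α) of languages over α) containing at least one nonempty language, closed under binary union, concatenation, Kleene plus, homomorphic images (images under monoid homomorphisms between free monoids), inverse homomorphisms (preimages under monoid homomorphisms between free monoids), and intersection with regular languages. Let G be a group, X a finite alphabet, and π : X* → G a surjective monoid homomorphism with word problem π⁻¹(1) ∈ F(X). Let H be a subgroup of G that is finitely generated, witnessed by a finite alphabet Y and a surjective monoid homomorphism ρ : Y* → H. Then the word problem ρ⁻¹(1) of H belongs to F(Y). -/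
/-- A language is regular if it is accepted by some deterministic finite
automaton whose state type is finite. -/
def IsRegularLang {α : Type} (L : Language α) : Prop :=
  ∃ (σ : Type) (_ : Fintype σ) (M : DFA α σ), M.accepts = L

/-- The Kleene plus of a language: `L⁺ = ⋃_{n ≥ 1} Lⁿ`. -/
def kleenePlus {α : Type} (L : Language α) : Language α :=
  ⋃ n : ℕ, L ^ (n + 1)

/-- A full AFL: a class of languages over finite alphabets containing at least one nonempty language
and closed under binary union, concatenation, Kleene plus, homomorphic images,
inverse homomorphisms, and intersection with regular languages. -/
structure IsFullAFL (F : ∀ α : Type, Set (Language α)) : Prop where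
  nonempty : ∃ (α : Type) (_ : Finite α) (L : Language α), L ∈ F α ∧ L ≠ (∅ : Set (List α))
  union : ∀ (α : Type) [Finite α] (L₁ L₂ : Language α),
    L₁ ∈ F α → L₂ ∈ F α → ((L₁ ∪ L₂ : Set (List α)) : Language α) ∈ F α
  concat : ∀ (α : Type) [Finite α] (L₁ L₂ : Language α),
    L₁ ∈ F α → L₂ ∈ F α → L₁ * L₂ ∈ F α
  plus : ∀ (α : Type) [Finite α] (L : Language α), L ∈ F α → kleenePlus L ∈ F α
  homImage : ∀ (α β : Type) [Finite α] [Finite β] (φ : FreeMonoid α →* FreeMonoid β) (L : Language α),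
    L ∈ F α →
    (((fun w : List α => FreeMonoid.toList (φ (FreeMonoid.ofList w))) '' L :
      Set (List β)) : Language β) ∈ F β
  invHom : ∀ (α β : Type) [Finite α] [Finite β] (φ : FreeMonoid β →* FreeMonoid α) (L : Language α),
    L ∈ F α →
    ({w : List β | FreeMonoid.toList (φ (FreeMonoid.ofList w)) ∈ L} :
      Language β) ∈ F β
  interRegular : ∀ (α : Type) [Finite α] (L K : Language α),
    L ∈ F α → IsRegularLang K → ((L ∩ K : Set (List α)) : Language α) ∈ F α

/-- If `F` is a full AFL and `G` has word problem in `F`, then every finitely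
generated subgroup `H` of `G` has word problem in `F`. -/
theorem wordProblem_subgroup_mem_of_fullAFL
    (F : ∀ α : Type, Set (Language α)) (hF : IsFullAFL F)
    (G : Type) [Group G] (X : Type) [Fintype X]
    (π : FreeMonoid X →* G) (hπ : Function.Surjective π)
    (hWP : wordProblem π ∈ F X)
    (H : Subgroup G) (Y : Type) [Fintype Y]
    (ρ : FreeMonoid Y →* H) (hρ : Function.Surjective ρ) :
    wordProblem ρ ∈ F Y := by
  choose u hu using hπ
  let φ : FreeMonoid Y →* FreeMonoid X :=
    FreeMonoid.lift (fun y => u ((ρ (FreeMonoid.of y) : G)))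
  have key : ∀ w : FreeMonoid Y, π (φ w) = (ρ w : G) := by
    intro w
    have : (π.comp φ) w = ((H.subtype.comp ρ) w) := by
      have := DFunLike.congr_fun
        (FreeMonoid.hom_eq (f := π.comp φ) (g := H.subtype.comp ρ)
          (fun y => by simp [φ, hu])) w
      exact this
    simpa using this
  have : wordProblem ρ =
      ({w : List Y | FreeMonoid.toList (φ (FreeMonoid.ofList w)) ∈ wordProblem π} :
        Language Y) := by
    ext w
    show ρ (FreeMonoid.ofList w) = 1 ↔
      π (FreeMonoid.ofList (FreeMonoid.toList (φ (FreeMonoid.ofList w)))) = 1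
    rw [FreeMonoid.ofList_toList, key]
    exact ⟨fun h => by rw [h]; simp, fun h => Subtype.ext h⟩
  rw [this]
  exact hF.invHom X Y φ (wordProblem π) hWP
end

section
/- Let F be a full AFL: a class of languages (assigning to each alphabet α a set F(α) of languages over α) containing at least one nonempty language, closed under binary union, concatenation, Kleene plus, homomorphic images (images under monoid homomorphisms between free monoids), inverse homomorphisms (preimages under monoid homomorphisms between free monoids), and intersection with regular languages. Let G' be a group and G a subgroup of G' of finite index. Suppose X is a finite alphabet and π : X* → G is a surjective monoid homomorphism with word problem π⁻¹(1) ∈ F(X), and suppose Y is a finite alphabet and ρ : Y* → G' is a surjective monoid homomorphism. Then the word problem ρ⁻¹(1) of G' belongs to F(Y). -/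
namespace AFLAuxWP

variable {G' : Type} [Group G'] {Y : Type}

open Classical in
/-- A section of the quotient map sending the trivial coset to `1`. -/
noncomputable def sec (G : Subgroup G') (c : G' ⧸ G) : G' :=
  if c = ((1 : G') : G' ⧸ G) then 1 else Quotient.out c

lemma mk_sec (G : Subgroup G') (c : G' ⧸ G) : ((sec G c : G') : G' ⧸ G) = c := by
  classical
  rw [sec]
  split_ifs with h
  · exact h.symm
  · exact QuotientGroup.out_eq' c

lemma sec_one (G : Subgroup G') : sec G ((1 : G') : G' ⧸ G) = 1 := by
  classical
  rw [sec, if_pos rfl]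

lemma delta_mem (G : Subgroup G') (ρ : FreeMonoid Y →* G') (c : G' ⧸ G) (y : Y) :
    (sec G c)⁻¹ * ρ (FreeMonoid.of y) * sec G ((ρ (FreeMonoid.of y))⁻¹ • c) ∈ G := by
  have h2 : (((ρ (FreeMonoid.of y))⁻¹ * sec G c : G') : G' ⧸ G)
      = ((sec G ((ρ (FreeMonoid.of y))⁻¹ • c) : G') : G' ⧸ G) := by
    rw [mk_sec, ← smul_eq_mul, ← MulAction.Quotient.smul_mk, mk_sec]
  have h3 := QuotientGroup.eq.mp h2
  have h4 : ((ρ (FreeMonoid.of y))⁻¹ * sec G c)⁻¹ * sec G ((ρ (FreeMonoid.of y))⁻¹ • c)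
      = (sec G c)⁻¹ * ρ (FreeMonoid.of y) * sec G ((ρ (FreeMonoid.of y))⁻¹ • c) := by
    group
  rwa [h4] at h3

/-- The canonical annotation of a word with the cosets traversed while reading it. -/
def ann (G : Subgroup G') (ρ : FreeMonoid Y →* G') : (G' ⧸ G) → List Y → List ((G' ⧸ G) × Y)
  | _, [] => []
  | c, y :: w => (c, y) :: ann G ρ ((ρ (FreeMonoid.of y))⁻¹ • c) w

lemma ann_snd (G : Subgroup G') (ρ : FreeMonoid Y →* G') :
    ∀ (w : List Y) (c : G' ⧸ G), List.map Prod.snd (ann G ρ c w) = w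
  | [], _ => rfl
  | y :: w, c => by
      simp only [ann, List.map_cons, ann_snd G ρ w]

open Classical in
/-- The coset automaton, checking that a word over the annotated alphabet is a
correct annotation starting and ending at the trivial coset. -/
noncomputable def cosetDFA (G : Subgroup G') (ρ : FreeMonoid Y →* G') :
    DFA ((G' ⧸ G) × Y) (Option (G' ⧸ G)) where
  step := fun s z =>
    s.bind fun c => if z.1 = c then some ((ρ (FreeMonoid.of z.2))⁻¹ • c) else none
  start := some ((1 : G') : G' ⧸ G)
  accept := {some ((1 : G') : G' ⧸ G)}

lemma evalFrom_none (G : Subgroup G') (ρ : FreeMonoid Y →* G') :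
    ∀ z : List ((G' ⧸ G) × Y), (cosetDFA G ρ).evalFrom none z = none
  | [] => rfl
  | a :: z => by
      have h : (cosetDFA G ρ).step none a = none := rfl
      show (cosetDFA G ρ).evalFrom ((cosetDFA G ρ).step none a) z = none
      rw [h]; exact evalFrom_none G ρ z

lemma evalFrom_ann (G : Subgroup G') (ρ : FreeMonoid Y →* G') :
    ∀ (w : List Y) (c : G' ⧸ G),
      (cosetDFA G ρ).evalFrom (some c) (ann G ρ c w)
        = some ((ρ (FreeMonoid.ofList w))⁻¹ • c)
  | [], c => by simp [ann]
  | y :: w, c => by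
      have hstep : (cosetDFA G ρ).step (some c) (c, y)
          = some ((ρ (FreeMonoid.of y))⁻¹ • c) := by
        simp [cosetDFA]
      show (cosetDFA G ρ).evalFrom ((cosetDFA G ρ).step (some c) (c, y))
          (ann G ρ ((ρ (FreeMonoid.of y))⁻¹ • c) w) = _
      rw [hstep, evalFrom_ann G ρ w]
      rw [FreeMonoid.ofList_cons, map_mul, mul_inv_rev, mul_smul]

lemma eq_ann_of_evalFrom (G : Subgroup G') (ρ : FreeMonoid Y →* G') :
    ∀ (z : List ((G' ⧸ G) × Y)) (c : G' ⧸ G),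
      (cosetDFA G ρ).evalFrom (some c) z ≠ none →
      z = ann G ρ c (z.map Prod.snd)
  | [], _, _ => rfl
  | (d, y) :: z, c, h => by
      by_cases hd : d = c
      · subst hd
        have hstep : (cosetDFA G ρ).step (some d) (d, y)
            = some ((ρ (FreeMonoid.of y))⁻¹ • d) := by simp [cosetDFA]
        have h' : (cosetDFA G ρ).evalFrom (some ((ρ (FreeMonoid.of y))⁻¹ • d)) z ≠ none := by
          intro hc
          apply h
          show (cosetDFA G ρ).evalFrom ((cosetDFA G ρ).step (some d) (d, y)) z = none
          rw [hstep]; exact hc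
        have := eq_ann_of_evalFrom G ρ z _ h'
        simp only [List.map_cons, ann]
        exact List.cons_eq_cons.mpr ⟨rfl, this⟩
      · exfalso
        apply h
        have hstep : (cosetDFA G ρ).step (some c) (d, y) = none := by
          simp [cosetDFA, hd]
        show (cosetDFA G ρ).evalFrom ((cosetDFA G ρ).step (some c) (d, y)) z = none
        rw [hstep]; exact evalFrom_none G ρ z

lemma key {X : Type} (G : Subgroup G') (π : FreeMonoid X →* G) (ρ : FreeMonoid Y →* G')
    (wd : (G' ⧸ G) → Y → FreeMonoid X)
    (hwd : ∀ (c : G' ⧸ G) (y : Y), ((π (wd c y) : G) : G')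
      = (sec G c)⁻¹ * ρ (FreeMonoid.of y) * sec G ((ρ (FreeMonoid.of y))⁻¹ • c)) :
    ∀ (w : List Y) (c : G' ⧸ G),
      ((π ((FreeMonoid.lift fun z : (G' ⧸ G) × Y => wd z.1 z.2)
          (FreeMonoid.ofList (ann G ρ c w))) : G) : G')
        = (sec G c)⁻¹ * ρ (FreeMonoid.ofList w) * sec G ((ρ (FreeMonoid.ofList w))⁻¹ • c)
  | [], c => by
      simp [ann]
  | y :: w, c => by
      have IH := key G π ρ wd hwd w ((ρ (FreeMonoid.of y))⁻¹ • c)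
      simp only [ann, FreeMonoid.ofList_cons, map_mul, FreeMonoid.lift_eval_of,
        Subgroup.coe_mul, hwd, IH]
      rw [mul_inv_rev, mul_smul]
      group

end AFLAuxWP

/-- If `F` is a full AFL and `G` is a finite-index subgroup of `G'` with word
problem in `F`, then `G'` has word problem in `F`. -/
theorem wordProblem_finiteIndex_supergroup_mem_of_fullAFL
    (F : ∀ α : Type, Set (Language α)) (hF : IsFullAFL F)
    (G' : Type) [Group G'] (G : Subgroup G') (hGfin : G.FiniteIndex)
    (X : Type) [Fintype X]
    (π : FreeMonoid X →* G) (hπ : Function.Surjective π)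
    (hWP : wordProblem π ∈ F X)
    (Y : Type) [Fintype Y]
    (ρ : FreeMonoid Y →* G') (hρ : Function.Surjective ρ) :
    wordProblem ρ ∈ F Y := by
  classical
  haveI : Fintype (G' ⧸ G) := G.fintypeQuotientOfFiniteIndex
  set Z := (G' ⧸ G) × Y with hZ
  -- choose words representing the correction elements
  have hch : ∀ (c : G' ⧸ G) (y : Y), ∃ u : FreeMonoid X, ((π u : G) : G')
      = (AFLAuxWP.sec G c)⁻¹ * ρ (FreeMonoid.of y)
        * AFLAuxWP.sec G ((ρ (FreeMonoid.of y))⁻¹ • c) := by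
    intro c y
    obtain ⟨u, hu⟩ := hπ ⟨_, AFLAuxWP.delta_mem G ρ c y⟩
    exact ⟨u, by rw [hu]⟩
  choose wd hwd using hch
  set ψ : FreeMonoid Z →* FreeMonoid X :=
    FreeMonoid.lift fun z : Z => wd z.1 z.2 with hψ
  have h1 : ({z : List Z | FreeMonoid.toList (ψ (FreeMonoid.ofList z)) ∈ wordProblem π} :
      Language Z) ∈ F Z := hF.invHom X Z ψ _ hWP
  have hreg : IsRegularLang ((AFLAuxWP.cosetDFA G ρ).accepts : Language Z) :=
    ⟨Option (G' ⧸ G), inferInstance, AFLAuxWP.cosetDFA G ρ, rfl⟩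
  have h2 := hF.interRegular Z _ _ h1 hreg
  have h3 := hF.homImage Z Y (FreeMonoid.map Prod.snd) _ h2
  have hEq : ((fun w : List Z =>
      FreeMonoid.toList ((FreeMonoid.map Prod.snd) (FreeMonoid.ofList w))) ''
        (({z : List Z | FreeMonoid.toList (ψ (FreeMonoid.ofList z)) ∈ wordProblem π} :
          Language Z) ∩ ((AFLAuxWP.cosetDFA G ρ).accepts : Language Z) : Set (List Z)))
      = (wordProblem ρ : Set (List Y)) := by
    ext w
    constructor
    · rintro ⟨z, ⟨hz1, hz2⟩, rfl⟩
      -- z is accepted: it is a proper annotation ending at the trivial coset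
      have hiz : FreeMonoid.toList ((FreeMonoid.map Prod.snd) (FreeMonoid.ofList z))
          = z.map Prod.snd := rfl
      have hacc : (AFLAuxWP.cosetDFA G ρ).evalFrom (some ((1 : G') : G' ⧸ G)) z
          = some ((1 : G') : G' ⧸ G) := hz2
      have hne : (AFLAuxWP.cosetDFA G ρ).evalFrom (some ((1 : G') : G' ⧸ G)) z ≠ none := by
        rw [hacc]; exact Option.some_ne_none _
      have hzann := AFLAuxWP.eq_ann_of_evalFrom G ρ z _ hne
      set v := z.map Prod.snd with hv
      have heval := AFLAuxWP.evalFrom_ann G ρ v ((1 : G') : G' ⧸ G)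
      rw [← hzann] at heval
      rw [hacc] at heval
      have hcoset : (ρ (FreeMonoid.ofList v))⁻¹ • (((1 : G') : G' ⧸ G))
          = ((1 : G') : G' ⧸ G) := (Option.some.injEq _ _ ▸ heval.symm ▸ rfl)
      -- value of π on ψ z
      have hval := AFLAuxWP.key G π ρ wd hwd v ((1 : G') : G' ⧸ G)
      rw [← hzann] at hval
      have hπ1 : π (ψ (FreeMonoid.ofList z)) = 1 := hz1
      rw [hψ] at hπ1
      rw [hπ1] at hval
      rw [hcoset, AFLAuxWP.sec_one] at hval
      simp only [OneMemClass.coe_one, inv_one, one_mul, mul_one] at hval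
      show ρ (FreeMonoid.ofList (z.map Prod.snd)) = 1
      rw [← hv, ← hval]
    · intro hw
      have hw1 : ρ (FreeMonoid.ofList w) = 1 := hw
      refine ⟨AFLAuxWP.ann G ρ ((1 : G') : G' ⧸ G) w, ⟨?_, ?_⟩, ?_⟩
      · -- in the inverse image of the word problem of π
        show π (ψ (FreeMonoid.ofList (AFLAuxWP.ann G ρ _ w))) = 1
        have hval := AFLAuxWP.key G π ρ wd hwd w ((1 : G') : G' ⧸ G)
        rw [hw1] at hval
        have : ((π (ψ (FreeMonoid.ofList (AFLAuxWP.ann G ρ ((1 : G') : G' ⧸ G) w))) : G) : G')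
            = 1 := by
          rw [hψ]
          rw [hval]
          simp [AFLAuxWP.sec_one]
        exact Subtype.ext this
      · -- accepted by the coset automaton
        show (AFLAuxWP.cosetDFA G ρ).evalFrom (some ((1 : G') : G' ⧸ G)) _
            ∈ ({some ((1 : G') : G' ⧸ G)} : Set _)
        rw [AFLAuxWP.evalFrom_ann G ρ w, hw1]
        simp
      · show FreeMonoid.toList _ = w
        have : FreeMonoid.toList ((FreeMonoid.map Prod.snd)
            (FreeMonoid.ofList (AFLAuxWP.ann G ρ ((1 : G') : G' ⧸ G) w)))
            = (AFLAuxWP.ann G ρ ((1 : G') : G' ⧸ G) w).map Prod.snd := rfl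
        rw [this, AFLAuxWP.ann_snd]
  rw [show (wordProblem ρ : Language Y) = _ from (congrArg _ hEq.symm : _)] at *
  exact hEq ▸ h3
end
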